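/- Let p ∈ (1,2), μ > 0, and let D, E be symmetric-matrix-valued functions in L²(Ω) with Ω of finite measure. Then ∫_Ω |E|² (μ + |D(x)|²)^{(p−2)/2} dx ≥ ‖E‖²_{L^{4/(4−p)}(Ω)} / (μ|Ω| + ‖D‖²_{L²(Ω)})^{(2−p)/2}. -/

import Mathlib

/-!
With `s = 2/(4-p) ∈ (0,1)` and `G = μ + |D|²`, the weight is `G^{-(1-s)/s}`, so pointwise
`|E|^{4/(4-p)} = (|E|² G^{(p-2)/2})^s · G^{1-s}`. Hölder's inequality with the conjugate exponents
`1/s` and `1/(1-s)` bounds `∫ |E|^{4/(4-p)}` by `(∫ |E|² G^{(p-2)/2})^s (∫ G)^{1-s}`, and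
`∫_Ω G = μ|Ω| + ‖D‖²₂`; raising to the power `1/s = (4-p)/2` gives the claim.
-/

open MeasureTheory

theorem MeasureTheory.Integrable.memLp_rpow_of_nonneg {α : Type*} [MeasurableSpace α]
    {μ : Measure α} {f : α → ℝ} (hf : Integrable f μ) (hf_nn : 0 ≤ᵐ[μ] f) {s : ℝ} (hs : 0 < s) :
    MemLp (fun x => f x ^ s) (ENNReal.ofReal (1 / s)) μ := by
  have h := (memLp_one_iff_integrable.mpr hf).norm_rpow_div (ENNReal.ofReal s)
  rw [ENNReal.toReal_ofReal hs.le, one_div, ← ENNReal.ofReal_inv_of_pos hs] at h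
  rw [one_div]
  refine h.ae_eq ?_
  filter_upwards [hf_nn] with x hx
  rw [Real.norm_of_nonneg hx]

theorem MeasureTheory.integral_rpow_mul_rpow_le_of_nonneg {α : Type*} [MeasurableSpace α]
    {μ : Measure α} {s t : ℝ} (hs : 0 < s) (ht : 0 < t) (hst : s + t = 1) {f g : α → ℝ}
    (hf_nn : 0 ≤ᵐ[μ] f) (hg_nn : 0 ≤ᵐ[μ] g) (hf : Integrable f μ) (hg : Integrable g μ) :
    ∫ x, f x ^ s * g x ^ t ∂μ ≤ (∫ x, f x ∂μ) ^ s * (∫ x, g x ∂μ) ^ t := by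
  have hconj : (1 / s).HolderConjugate (1 / t) :=
    Real.holderConjugate_iff.mpr ⟨by rw [lt_one_div one_pos hs]; linarith, by simpa using hst⟩
  have h := integral_mul_le_Lp_mul_Lq_of_nonneg hconj
    (hf_nn.mono fun x hx => Real.rpow_nonneg hx s) (hg_nn.mono fun x hx => Real.rpow_nonneg hx t)
    (hf.memLp_rpow_of_nonneg hf_nn hs) (hg.memLp_rpow_of_nonneg hg_nn ht)
  have hcancel (u : α → ℝ) (r : ℝ) (hu : 0 ≤ᵐ[μ] u) (hr : 0 < r) :
      ∫ x, (u x ^ r) ^ (1 / r) ∂μ = ∫ x, u x ∂μ :=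
    integral_congr_ae <| hu.mono fun x hx => by
      simp only [← Real.rpow_mul hx, mul_one_div_cancel hr.ne', Real.rpow_one]
  simpa only [hcancel f s hf_nn hs, hcancel g t hg_nn ht, one_div_one_div] using h

theorem Real.mul_rpow_neg_mul_rpow_mul {a b : ℝ} (ha : 0 ≤ a) (hb : 0 < b) (s t : ℝ) :
    (a * b ^ (-t)) ^ s * b ^ (t * s) = a ^ s := by
  rw [Real.mul_rpow ha (Real.rpow_nonneg hb.le _), ← Real.rpow_mul hb.le, mul_assoc,
    ← Real.rpow_add hb, neg_mul, neg_add_cancel, Real.rpow_zero, mul_one]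

theorem Real.rpow_one_div_div_rpow_le_of_le_rpow_mul_rpow {A B C s t : ℝ} (hA : 0 ≤ A)
    (hB : 0 ≤ B) (hC : 0 ≤ C) (hs : 0 < s) (ht : 0 < t) (h : B ≤ A ^ s * C ^ t) :
    B ^ (1 / s) / C ^ (t / s) ≤ A := by
  rcases hC.eq_or_lt with rfl | hC
  · rwa [Real.zero_rpow (div_pos ht hs).ne', div_zero]
  rw [div_le_iff₀ (Real.rpow_pos_of_pos hC _)]
  calc B ^ (1 / s) ≤ (A ^ s * C ^ t) ^ (1 / s) := by gcongr
    _ = A * C ^ (t / s) := by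
      rw [Real.mul_rpow (Real.rpow_nonneg hA _) (Real.rpow_nonneg hC.le _), ← Real.rpow_mul hA,
        ← Real.rpow_mul hC.le, mul_one_div_cancel hs.ne', Real.rpow_one, mul_one_div]

theorem reverse_holder_application_general
    (p μ : ℝ) (hp2 : p < 2) (hμ : 0 < μ)
    (Ω : Set (EuclideanSpace ℝ (Fin 3))) (hΩ : volume Ω < ⊤)
    (D E : EuclideanSpace ℝ (Fin 3) → Matrix (Fin 3) (Fin 3) ℝ)
    (nsq : Matrix (Fin 3) (Fin 3) ℝ → ℝ)
    (hnsq : nsq = fun M => ∑ i, ∑ j, (M i j) ^ 2)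
    (hD2 : IntegrableOn (fun x => nsq (D x)) Ω volume)
    (hEw : IntegrableOn (fun x => nsq (E x) * (μ + nsq (D x)) ^ ((p - 2) / 2)) Ω volume) :
    (∫ x in Ω, nsq (E x) * (μ + nsq (D x)) ^ ((p - 2) / 2)) ≥
      (∫ x in Ω, Real.sqrt (nsq (E x)) ^ (4 / (4 - p))) ^ ((4 - p) / 2) /
        (μ * (volume Ω).toReal + ∫ x in Ω, nsq (D x)) ^ ((2 - p) / 2) := by
  have hnsq_nonneg (M : Matrix (Fin 3) (Fin 3) ℝ) : 0 ≤ nsq M := by rw [hnsq]; positivity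
  have hG_pos (x : EuclideanSpace ℝ (Fin 3)) : 0 < μ + nsq (D x) := by
    linarith [hnsq_nonneg (D x)]
  have h4p : 0 < 4 - p := by linarith
  have hs : 0 < 2 / (4 - p) := div_pos two_pos h4p
  have ht : 0 < (2 - p) / (4 - p) := div_pos (by linarith) h4p
  have hμΩ : IntegrableOn (fun _ => μ) Ω volume := integrableOn_const hΩ.ne
  have holder := integral_rpow_mul_rpow_le_of_nonneg hs ht (by field_simp; ring)
    (ae_of_all _ fun x => mul_nonneg (hnsq_nonneg _) (Real.rpow_nonneg (hG_pos x).le _))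
    (ae_of_all _ fun x => (hG_pos x).le) hEw (hμΩ.add hD2)
  have hfactor (x : EuclideanSpace ℝ (Fin 3)) :
      (nsq (E x) * (μ + nsq (D x)) ^ ((p - 2) / 2)) ^ (2 / (4 - p)) *
          (μ + nsq (D x)) ^ ((2 - p) / (4 - p)) = Real.sqrt (nsq (E x)) ^ (4 / (4 - p)) := by
    rw [Real.sqrt_eq_rpow, ← Real.rpow_mul (hnsq_nonneg _)]
    convert Real.mul_rpow_neg_mul_rpow_mul (hnsq_nonneg (E x)) (hG_pos x) (2 / (4 - p))
      ((2 - p) / 2) using 3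
    · rw [← neg_div, neg_sub]
    · field_simp
    · field_simp; norm_num
  have hG_integral : ∫ x in Ω, μ + nsq (D x) = μ * (volume Ω).toReal + ∫ x in Ω, nsq (D x) := by
    rw [integral_add hμΩ hD2, setIntegral_const, smul_eq_mul, measureReal_def, mul_comm]
  simp only [hfactor, hG_integral] at holder
  rw [ge_iff_le, show (4 - p) / 2 = 1 / (2 / (4 - p)) by field_simp,
    show (2 - p) / 2 = (2 - p) / (4 - p) / (2 / (4 - p)) by field_simp]
  refine Real.rpow_one_div_div_rpow_le_of_le_rpow_mul_rpow ?_ ?_ ?_ hs ht holder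
  · exact integral_nonneg fun x => mul_nonneg (hnsq_nonneg _) (Real.rpow_nonneg (hG_pos x).le _)
  · exact integral_nonneg fun x => Real.rpow_nonneg (Real.sqrt_nonneg _) _
  · exact add_nonneg (by positivity) (integral_nonneg fun x => hnsq_nonneg _)

/-- Reverse-Hölder lower bound for the degenerate elliptic form: for `p ∈ (1,2)`,
`μ > 0`, symmetric-matrix-valued `D, E ∈ L²(Ω)`,
`∫_Ω |E|²(μ+|D|²)^{(p-2)/2} ≥ ‖E‖²_{L^{4/(4-p)}} / (μ|Ω| + ‖D‖²_{L²})^{(2-p)/2}`. -/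
theorem reverse_holder_application
    (p μ : ℝ) (hp1 : 1 < p) (hp2 : p < 2) (hμ : 0 < μ)
    (Ω : Set (EuclideanSpace ℝ (Fin 3))) (hΩ : volume Ω < ⊤)
    (D E : EuclideanSpace ℝ (Fin 3) → Matrix (Fin 3) (Fin 3) ℝ)
    (hD : ∀ i j, Measurable fun x => D x i j)
    (hE : ∀ i j, Measurable fun x => E x i j)
    (hDs : ∀ x, (D x).IsSymm) (hEs : ∀ x, (E x).IsSymm)
    (nsq : Matrix (Fin 3) (Fin 3) ℝ → ℝ)
    (hnsq : nsq = fun M => ∑ i, ∑ j, (M i j) ^ 2)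
    (hD2 : IntegrableOn (fun x => nsq (D x)) Ω volume)
    (hE2 : IntegrableOn (fun x => nsq (E x)) Ω volume)
    (hE4 : IntegrableOn (fun x => Real.sqrt (nsq (E x)) ^ (4 / (4 - p))) Ω volume)
    (hEw : IntegrableOn (fun x => nsq (E x) * (μ + nsq (D x)) ^ ((p - 2) / 2)) Ω volume) :
    (∫ x in Ω, nsq (E x) * (μ + nsq (D x)) ^ ((p - 2) / 2)) ≥
      (∫ x in Ω, Real.sqrt (nsq (E x)) ^ (4 / (4 - p))) ^ ((4 - p) / 2) /
        (μ * (volume Ω).toReal + ∫ x in Ω, nsq (D x)) ^ ((2 - p) / 2) :=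
  reverse_holder_application_general p μ hp2 hμ Ω hΩ D E nsq hnsq hD2 hEw
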